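/- Let G = (V,E) be a game graph with weight function w, and let E* ⊆ E0 be a set of Player-0 edges such that for every node v ∈ V there exists an edge e ∈ minEdges(v) with e ∉ E*. Then G' = (V, E∖E*) is again a game graph (every node retains an outgoing edge), and for every edge e ∈ E∖E*, the edge-optimal value of e in G' (with respect to w restricted to E∖E*) equals optE(e) computed in G; hence the optimal QaSTel of G, restricted to the edges of E∖E*, is the optimal QaSTel of G'. -/
import Mathlib


open scoped Classical

noncomputable section

namespace QaSTelPaper

variable {V : Type*}

/-- Prefix weight `w(ρ[0;i])` of a play. -/
def prefW (w : V × V → ℤ) (ρ : ℕ → V) (i : ℕ) : ℤ :=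
  ∑ j ∈ Finset.range i, w (ρ j, ρ (j + 1))

/-- A play on the edge set `E`. -/
def IsPlay (E : Set (V × V)) (ρ : ℕ → V) : Prop :=
  ∀ i, (ρ i, ρ (i + 1)) ∈ E

/-- A Player-0 strategy assigns to each history and current Player-0 node a successor
that forms an edge. -/
def IsStrategy (V0 : Set V) (E : Set (V × V)) (π : List V → V → V) : Prop :=
  ∀ H v, v ∈ V0 → (v, π H v) ∈ E

/-- History of the play `ρ` strictly before index `i`. -/
def hist (ρ : ℕ → V) (i : ℕ) : List V :=
  List.ofFn fun j : Fin i => ρ j.1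

/-- `ρ` is a `π`-play. -/
def FollowsStrat (V0 : Set V) (π : List V → V → V) (ρ : ℕ → V) : Prop :=
  ∀ i, ρ i ∈ V0 → ρ (i + 1) = π (hist ρ i) (ρ i)

/-- The energy objective `En_c(w)`. -/
def En (w : V × V → ℤ) (c : ℕ) : Set (ℕ → V) :=
  {ρ | ∀ i, 0 ≤ (c : ℤ) + prefW w ρ i}

/-- The mean-payoff objective `MP(w)`. -/
def MP (w : V × V → ℤ) : Set (ℕ → V) :=
  {ρ | 0 ≤ Filter.limsup (fun n : ℕ => ((prefW w ρ n : ℝ) / (n : ℝ) : EReal)) Filter.atTop}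

/-- `π` is winning from `v` for objective `φ`. -/
def WinningFrom (V0 : Set V) (E : Set (V × V)) (π : List V → V → V)
    (φ : Set (ℕ → V)) (v : V) : Prop :=
  ∀ ρ, IsPlay E ρ → FollowsStrat V0 π ρ → ρ 0 = v → ρ ∈ φ

/-- The winning region of Player 0 for objective `φ`. -/
def Win (V0 : Set V) (E : Set (V × V)) (φ : Set (ℕ → V)) : Set V :=
  {v | ∃ π, IsStrategy V0 E π ∧ WinningFrom V0 E π φ v}

/-- A quantitative strategy template (QaSTel): monotone assignment of sets of activated
outgoing edges. -/
def IsQaSTel (E : Set (V × V)) (Temp : V → ℕ∞ → Set (V × V)) : Prop :=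
  (∀ u c e, e ∈ Temp u c → e ∈ E ∧ e.1 = u) ∧
  ∀ u c c', c ≤ c' → Temp u c ⊆ Temp u c'

/-- Activation value `act_Π(e)`: the least `k` such that `e ∈ Π(e.1, c)` for all `c ≥ k`. -/
def act (Temp : V → ℕ∞ → Set (V × V)) (e : V × V) : ℕ∞ :=
  sInf {k : ℕ∞ | ∀ c, k ≤ c → e ∈ Temp e.1 c}

/-- A QaSTel extended to integer credits: empty for negative credits. -/
def tmplZ (Temp : V → ℕ∞ → Set (V × V)) (u : V) (z : ℤ) : Set (V × V) :=
  if 0 ≤ z then Temp u (z.toNat : ℕ∞) else ∅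

/-- `ρ` is a `(Π, c)`-play. -/
def TemplatePlay (V0 : Set V) (w : V × V → ℤ) (Temp : V → ℕ∞ → Set (V × V))
    (c : ℕ) (ρ : ℕ → V) : Prop :=
  (∀ i, ρ i ∈ V0 → (ρ i, ρ (i + 1)) ∈ tmplZ Temp (ρ i) ((c : ℤ) + prefW w ρ i)) ∨
  ∃ k : ℕ,
    (∀ i ≤ k, ρ i ∈ V0 → (ρ i, ρ (i + 1)) ∈ tmplZ Temp (ρ i) ((c : ℤ) + prefW w ρ i)) ∧
    ρ (k + 1) ∈ V0 ∧ tmplZ Temp (ρ (k + 1)) ((c : ℤ) + prefW w ρ (k + 1)) = ∅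

/-- `π ⊨_c Π`: every `π`-play is a `(Π, c)`-play. -/
def FollowsTemplate (V0 : Set V) (E : Set (V × V)) (w : V × V → ℤ)
    (π : List V → V → V) (Temp : V → ℕ∞ → Set (V × V)) (c : ℕ) : Prop :=
  ∀ ρ, IsPlay E ρ → FollowsStrat V0 π ρ → TemplatePlay V0 w Temp c ρ

/-- Shift a play by one step. -/
def shift (ρ : ℕ → V) : ℕ → V := fun i => ρ (i + 1)

/-- The edge-optimal value `optE(e)`: the least `m` such that for every initial credit
`c ≥ m` there is a Player-0 strategy `π` with `plays_π(G,e) ⊆ En_c(w)`. -/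
def optE (V0 : Set V) (E : Set (V × V)) (w : V × V → ℤ) (e : V × V) : ℕ∞ :=
  sInf {m : ℕ∞ | ∀ c : ℕ, m ≤ (c : ℕ∞) →
    ∃ π, IsStrategy V0 E π ∧
      ∀ ρ, IsPlay E ρ → (ρ 0, ρ 1) = e → FollowsStrat V0 π (shift ρ) → ρ ∈ En w c}

/-- The node-optimal value `opt(v)`. -/
def optV (V0 : Set V) (E : Set (V × V)) (w : V × V → ℤ) (v : V) : ℕ∞ :=
  sInf {m : ℕ∞ | ∀ c : ℕ, m ≤ (c : ℕ∞) →
    ∃ π, IsStrategy V0 E π ∧ WinningFrom V0 E π (En w c) v}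

/-- Truncated subtraction `l ⊖ a` of an integer from an extended natural. -/
def osub (l : ℕ∞) (a : ℤ) : ℕ∞ :=
  if l = ⊤ then ⊤ else (((l.toNat : ℤ) - a).toNat : ℕ∞)

/-- The edge-based value-iteration operator `O_E`. -/
def OE (V0 : Set V) (E : Set (V × V)) (w : V × V → ℤ)
    (μ : V × V → ℕ∞) (e : V × V) : ℕ∞ :=
  if e.2 ∈ V0 then
    sInf {x : ℕ∞ | ∃ e' ∈ E, e'.1 = e.2 ∧ x = osub (μ e') (w e)}
  else
    sSup {x : ℕ∞ | ∃ e' ∈ E, e'.1 = e.2 ∧ x = osub (μ e') (w e)}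

/-- The optimal QaSTel `Temp(u,k) = {e ∈ E(u) : optE(e) ≤ k}`. -/
def optTmpl (V0 : Set V) (E : Set (V × V)) (w : V × V → ℤ) :
    V → ℕ∞ → Set (V × V) :=
  fun u k => {e | e ∈ E ∧ e.1 = u ∧ optE V0 E w e ≤ k}

/-- Canonical extension of the memory-update function to histories. -/
def updMem {M : Type*} (α : M × V → M) (m0 : M) (H : List V) : M :=
  H.foldl (fun m v => α (m, v)) m0

/-- The strategy induced by a finite-memory machine `(M, m0, α, β)`. -/
def memStrat {M : Type*} (α : M × V → M) (β : M × V → V) (m0 : M) :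
    List V → V → V :=
  fun H v => β (updMem α m0 H, v)

end QaSTelPaper


namespace QaSTelPaper

variable {V : Type*}

lemma prefW_zero (w : V × V → ℤ) (ρ : ℕ → V) : prefW w ρ 0 = 0 := by
  simp [prefW]

lemma prefW_succ (w : V × V → ℤ) (ρ : ℕ → V) (i : ℕ) :
    prefW w ρ (i + 1) = prefW w ρ i + w (ρ i, ρ (i + 1)) :=
  Finset.sum_range_succ _ _

lemma prefW_shift (w : V × V → ℤ) (ρ : ℕ → V) (i : ℕ) :
    prefW w ρ (i + 1) = w (ρ 0, ρ 1) + prefW w (shift ρ) i := by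
  rw [prefW, Finset.sum_range_succ', add_comm]
  rfl

lemma hist_zero (ρ : ℕ → V) : hist ρ 0 = [] := by
  simp [hist]

lemma hist_cons (ρ : ℕ → V) (n : ℕ) : hist ρ (n + 1) = ρ 0 :: hist (shift ρ) n := by
  simp [hist, List.ofFn_succ, shift]

lemma hist_succ (ρ : ℕ → V) (n : ℕ) : hist ρ (n + 1) = hist ρ n ++ [ρ n] := by
  induction n generalizing ρ with
  | zero => simp [hist, List.ofFn_succ, hist_zero]
  | succ n ih =>
      rw [hist_cons, ih (shift ρ), hist_cons]
      simp [shift]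

lemma En_mono (w : V × V → ℤ) {c c' : ℕ} (h : c ≤ c') : En w c ⊆ En w c' := by
  intro ρ hρ i
  have h1 : 0 ≤ (c : ℤ) + prefW w ρ i := hρ i
  have h2 : (c : ℤ) ≤ (c' : ℤ) := by exact_mod_cast h
  simp only [En, Set.mem_setOf_eq] at *
  linarith

lemma optE_le_iff (V0 : Set V) (E : Set (V × V)) (w : V × V → ℤ) (e : V × V) (c : ℕ) :
    optE V0 E w e ≤ (c : ℕ∞) ↔
      ∃ π, IsStrategy V0 E π ∧
        ∀ ρ, IsPlay E ρ → (ρ 0, ρ 1) = e → FollowsStrat V0 π (shift ρ) → ρ ∈ En w c := by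
  constructor
  · intro h
    set S : Set ℕ∞ := {m | ∀ c' : ℕ, m ≤ (c' : ℕ∞) → ∃ π, IsStrategy V0 E π ∧
        ∀ ρ, IsPlay E ρ → (ρ 0, ρ 1) = e → FollowsStrat V0 π (shift ρ) → ρ ∈ En w c'} with hS
    have h' : sInf S ≤ (c : ℕ∞) := h
    have hne : S.Nonempty := by
      rcases Set.eq_empty_or_nonempty S with hemp | hne
      · rw [hemp, sInf_empty] at h'
        exact absurd h' (by simp)
      · exact hne
    exact csInf_mem hne c h'
  · intro h
    apply sInf_le
    intro c' hc'
    obtain ⟨π, hπ, hwin⟩ := h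
    have hcc' : c ≤ c' := by exact_mod_cast hc'
    exact ⟨π, hπ, fun ρ h1 h2 h3 => En_mono w hcc' (hwin ρ h1 h2 h3)⟩

lemma exists_play (V0 : Set V) (E : Set (V × V)) (hE : ∀ v : V, ∃ v', (v, v') ∈ E)
    (π : List V → V → V) (hπ : IsStrategy V0 E π) (e : V × V) (he : e ∈ E) :
    ∃ ρ : ℕ → V, IsPlay E ρ ∧ (ρ 0, ρ 1) = e ∧ FollowsStrat V0 π (shift ρ) := by
  classical
  set nxt : List V × V → List V × V := fun s =>
    (s.1 ++ [s.2], if s.2 ∈ V0 then π s.1 s.2 else Classical.choose (hE s.2)) with hnxt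
  set σ : ℕ → List V × V := fun n => nxt^[n] ([], e.2) with hσ
  have hσs : ∀ n, σ (n + 1) = nxt (σ n) := fun n => Function.iterate_succ_apply' nxt n _
  set ρ : ℕ → V := fun n => Nat.rec e.1 (fun k _ => (σ k).2) n with hρ
  have hρ0 : ρ 0 = e.1 := rfl
  have hρs : ∀ n, ρ (n + 1) = (σ n).2 := fun n => rfl
  have hhist : ∀ n, (σ n).1 = hist (shift ρ) n := by
    intro n
    induction n with
    | zero => simp [hσ, hist_zero]
    | succ n ih =>
        rw [hσs n, hist_succ]
        show (σ n).1 ++ [(σ n).2] = hist (shift ρ) n ++ [shift ρ n]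
        rw [ih]
        rfl
  have hedge : (ρ 0, ρ 1) = e := Prod.mk.eta
  refine ⟨ρ, ?_, hedge, ?_⟩
  · intro i
    cases i with
    | zero => exact hedge.symm ▸ he
    | succ n =>
        rw [hρs n, hρs (n + 1), hσs n]
        show ((σ n).2, if (σ n).2 ∈ V0 then π (σ n).1 (σ n).2
          else Classical.choose (hE (σ n).2)) ∈ E
        split_ifs with hv
        · exact hπ _ _ hv
        · exact Classical.choose_spec (hE (σ n).2)
  · intro i hv
    have h1 : shift ρ (i + 1) = (σ (i + 1)).2 := rfl
    rw [h1, hσs i]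
    show (if (σ i).2 ∈ V0 then π (σ i).1 (σ i).2 else Classical.choose (hE (σ i).2))
      = π (hist (shift ρ) i) (shift ρ i)
    rw [if_pos (show (σ i).2 ∈ V0 from hv), hhist i]
    rfl

lemma suffix_win (V0 : Set V) (E : Set (V × V)) (w : V × V → ℤ)
    (π : List V → V → V) (e e' : V × V) (he2 : e'.1 = e.2)
    (hpick : e.2 ∈ V0 → e'.2 = π [] e.2) (c : ℕ) (hc0 : 0 ≤ (c : ℤ) + w e)
    (hwin : ∀ ρ, IsPlay E ρ → (ρ 0, ρ 1) = e → FollowsStrat V0 π (shift ρ) → ρ ∈ En w c)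
    (he : e ∈ E) :
    ∀ ρ', IsPlay E ρ' → (ρ' 0, ρ' 1) = e' →
      FollowsStrat V0 (fun H v => π (e.2 :: H) v) (shift ρ') →
      ρ' ∈ En w (((c : ℤ) + w e).toNat) := by
  intro ρ' hplay' hedge' hfol'
  set ρ : ℕ → V := fun n => Nat.rec e.1 (fun k _ => ρ' k) n with hρdef
  have hshift : shift ρ = ρ' := funext fun n => rfl
  have hρ0 : ρ 0 = e.1 := rfl
  have hr0 : ρ' 0 = e.2 := by
    have h := congrArg Prod.fst hedge'
    simpa using h.trans he2
  have hr1 : ρ' 1 = e'.2 := congrArg Prod.snd hedge'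
  have hedge : (ρ 0, ρ 1) = e := by
    show (e.1, ρ' 0) = e
    rw [hr0]
  have hplay : IsPlay E ρ := by
    intro i
    cases i with
    | zero => exact hedge.symm ▸ he
    | succ n => exact hplay' n
  have hfol : FollowsStrat V0 π (shift ρ) := by
    rw [hshift]
    intro i hv
    cases i with
    | zero =>
        have hv' : e.2 ∈ V0 := hr0 ▸ hv
        show ρ' 1 = π (hist ρ' 0) (ρ' 0)
        rw [hist_zero, hr1, hr0]
        exact hpick hv'
    | succ n =>
        have h := hfol' n hv
        show ρ' (n + 2) = π (hist ρ' (n + 1)) (ρ' (n + 1))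
        rw [hist_cons, hr0]
        exact h
  have hEn := hwin ρ hplay hedge hfol
  intro i
  have h1 : 0 ≤ (c : ℤ) + prefW w ρ (i + 1) := hEn (i + 1)
  rw [prefW_shift, hedge, hshift] at h1
  show 0 ≤ ((((c : ℤ) + w e).toNat : ℕ) : ℤ) + prefW w ρ' i
  rw [Int.toNat_of_nonneg hc0]
  linarith

lemma step_lemma (V0 : Set V) (E : Set (V × V)) (hE : ∀ v : V, ∃ v', (v, v') ∈ E)
    (w : V × V → ℤ) (e : V × V) (he : e ∈ E) (c : ℕ)
    (hopt : optE V0 E w e ≤ (c : ℕ∞)) :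
    0 ≤ (c : ℤ) + w e ∧
    (e.2 ∈ V0 → ∃ e'' ∈ E, e''.1 = e.2 ∧
      optE V0 E w e'' ≤ ((((c : ℤ) + w e).toNat : ℕ) : ℕ∞)) ∧
    (e.2 ∉ V0 → ∀ e'' ∈ E, e''.1 = e.2 →
      optE V0 E w e'' ≤ ((((c : ℤ) + w e).toNat : ℕ) : ℕ∞)) := by
  obtain ⟨π, hπ, hwin⟩ := (optE_le_iff V0 E w e c).1 hopt
  obtain ⟨ρ, hplay, hedge, hfol⟩ := exists_play V0 E hE π hπ e he
  have hc0 : 0 ≤ (c : ℤ) + w e := by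
    have h1 : 0 ≤ (c : ℤ) + prefW w ρ 1 := hwin ρ hplay hedge hfol 1
    have hp : prefW w ρ 1 = w e := by
      rw [prefW, Finset.sum_range_one, hedge]
    rwa [hp] at h1
  have key : ∀ e'' ∈ E, e''.1 = e.2 → (e.2 ∈ V0 → e''.2 = π [] e.2) →
      optE V0 E w e'' ≤ ((((c : ℤ) + w e).toNat : ℕ) : ℕ∞) := by
    intro e'' heE h1 hp
    rw [optE_le_iff]
    exact ⟨fun H v => π (e.2 :: H) v, fun H v hv => hπ _ _ hv,
      suffix_win V0 E w π e e'' h1 hp c hc0 hwin he⟩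
  refine ⟨hc0, ?_, ?_⟩
  · intro hv
    exact ⟨(e.2, π [] e.2), hπ [] e.2 hv, rfl, key _ (hπ [] e.2 hv) rfl (fun _ => rfl)⟩
  · intro hv e'' heE h1
    exact key e'' heE h1 (fun h => absurd h hv)

end QaSTelPaper

open QaSTelPaper in
/-- removing a set `E*` of Player-0 edges that keeps, at every node, some
edge of minimal `optE`-value, yields again a game graph with unchanged edge-optimal
values; hence the optimal QaSTel of `G` restricted to the edges of `E∖E*` is the optimal
QaSTel of `G' = (V, E ∖ E*)`. -/
theorem statement14 {V : Type*} [Fintype V]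
    (V0 : Set V) (E : Set (V × V)) (hE : ∀ v : V, ∃ v', (v, v') ∈ E)
    (w : V × V → ℤ) (W : ℕ) (hw : ∀ e ∈ E, |w e| ≤ (W : ℤ))
    (Estar : Set (V × V)) (hsub : Estar ⊆ E) (hE0 : ∀ e ∈ Estar, e.1 ∈ V0)
    (hmin : ∀ v : V, ∃ e ∈ E, e.1 = v ∧ e ∉ Estar ∧
      ∀ e' ∈ E, e'.1 = v → optE V0 E w e ≤ optE V0 E w e') :
    (∀ v : V, ∃ v', (v, v') ∈ E \ Estar) ∧
    (∀ e ∈ E \ Estar, optE V0 (E \ Estar) w e = optE V0 E w e) ∧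
    ∀ (u : V) (k : ℕ∞),
      optTmpl V0 (E \ Estar) w u k = optTmpl V0 E w u k ∩ (E \ Estar) := by
  classical
  choose me hmeE hme1 hmeS hmeMin using hmin
  have hmePair : ∀ v : V, (v, (me v).2) = me v := by
    intro v
    have h := hme1 v
    exact Prod.ext h.symm rfl
  have part1 : ∀ v : V, ∃ v', (v, v') ∈ E \ Estar := by
    intro v
    exact ⟨(me v).2, by rw [hmePair v]; exact ⟨hmeE v, hmeS v⟩⟩
  set π' : List V → V → V := fun _ v => (me v).2 with hπ'def
  have hπ' : IsStrategy V0 (E \ Estar) π' := by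
    intro H v hv
    show (v, (me v).2) ∈ E \ Estar
    rw [hmePair v]
    exact ⟨hmeE v, hmeS v⟩
  have part2 : ∀ e ∈ E \ Estar, optE V0 (E \ Estar) w e = optE V0 E w e := by
    intro e he
    apply le_antisymm
    · -- hard direction: uses the min-edge strategy π'
      have hmem : (optE V0 E w e) ∈ {m : ℕ∞ | ∀ c : ℕ, m ≤ (c : ℕ∞) →
          ∃ π, IsStrategy V0 (E \ Estar) π ∧
            ∀ ρ, IsPlay (E \ Estar) ρ → (ρ 0, ρ 1) = e →
              FollowsStrat V0 π (shift ρ) → ρ ∈ En w c} := by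
        intro c hc
        refine ⟨π', hπ', ?_⟩
        intro ρ hplay hedge hfol
        have hplayE : IsPlay E ρ := fun i => (hplay i).1
        have inv : ∀ i : ℕ, 0 ≤ (c : ℤ) + prefW w ρ i ∧
            optE V0 E w (ρ i, ρ (i + 1)) ≤
              ((((c : ℤ) + prefW w ρ i).toNat : ℕ) : ℕ∞) := by
          intro i
          induction i with
          | zero =>
              refine ⟨by simp [prefW_zero], ?_⟩
              rw [hedge, prefW_zero]
              simpa using hc
          | succ i ih =>
              obtain ⟨ih1, ih2⟩ := ih
              set ci : ℕ := ((c : ℤ) + prefW w ρ i).toNat with hci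
              have hciz : (ci : ℤ) = (c : ℤ) + prefW w ρ i := Int.toNat_of_nonneg ih1
              have hstep := step_lemma V0 E hE w (ρ i, ρ (i + 1)) (hplayE i) ci ih2
              have hb : ((ci : ℤ) + w (ρ i, ρ (i + 1))).toNat
                  = ((c : ℤ) + prefW w ρ (i + 1)).toNat := by
                rw [hciz, prefW_succ, add_assoc]
              have h1 : 0 ≤ (c : ℤ) + prefW w ρ (i + 1) := by
                have h2 := hstep.1
                rw [hciz] at h2
                rw [prefW_succ]
                linarith
              refine ⟨h1, ?_⟩
              by_cases hv : ρ (i + 1) ∈ V0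
              · obtain ⟨e'', he''E, he''1, he''opt⟩ := hstep.2.1 hv
                have hnext : ρ (i + 2) = (me (ρ (i + 1))).2 := hfol i hv
                have heq : (ρ (i + 1), ρ (i + 2)) = me (ρ (i + 1)) := by
                  rw [hnext, hmePair]
                rw [heq]
                calc optE V0 E w (me (ρ (i + 1))) ≤ optE V0 E w e'' :=
                      hmeMin _ e'' he''E he''1
                  _ ≤ _ := by rw [← hb]; exact he''opt
              · have h3 := hstep.2.2 hv (ρ (i + 1), ρ (i + 2)) (hplayE (i + 1)) rfl
                rw [← hb]
                exact h3
        intro i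
        exact (inv i).1
      exact sInf_le hmem
    · -- easy direction
      have hmem : (optE V0 (E \ Estar) w e) ∈ {m : ℕ∞ | ∀ c : ℕ, m ≤ (c : ℕ∞) →
          ∃ π, IsStrategy V0 E π ∧
            ∀ ρ, IsPlay E ρ → (ρ 0, ρ 1) = e →
              FollowsStrat V0 π (shift ρ) → ρ ∈ En w c} := by
        intro c hc
        obtain ⟨π2, hπ2, hwin2⟩ := (optE_le_iff V0 (E \ Estar) w e c).1 hc
        refine ⟨π2, fun H v hv => (hπ2 H v hv).1, ?_⟩
        intro ρ hplay hedge hfol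
        have hplay' : IsPlay (E \ Estar) ρ := by
          intro i
          cases i with
          | zero => exact hedge.symm ▸ he
          | succ n =>
              by_cases hv : ρ (n + 1) ∈ V0
              · have h4 : ρ (n + 2) = π2 (hist (shift ρ) n) (ρ (n + 1)) := hfol n hv
                rw [show (ρ (n + 1), ρ (n + 2))
                    = (ρ (n + 1), π2 (hist (shift ρ) n) (ρ (n + 1))) from by rw [h4]]
                exact hπ2 _ _ hv
              · exact ⟨hplay (n + 1), fun hmem2 => hv (hE0 _ hmem2)⟩
        exact hwin2 ρ hplay' hedge hfol
      exact sInf_le hmem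
  refine ⟨part1, part2, ?_⟩
  intro u k
  ext e
  simp only [optTmpl, Set.mem_setOf_eq, Set.mem_inter_iff]
  constructor
  · rintro ⟨heE', h1, h2⟩
    rw [part2 e heE'] at h2
    exact ⟨⟨heE'.1, h1, h2⟩, heE'⟩
  · rintro ⟨⟨heE, h1, h2⟩, heE'⟩
    exact ⟨heE', h1, by rw [part2 e heE']; exact h2⟩
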